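/- Let f : (k+1)^V → ℝ be monotone and orthant submodular, let ε ≥ 0, and let f̂ : (k+1)^V → ℝ satisfy |f(x) − f̂(x)| ≤ ε for all x. Let s, z ∈ (k+1)^V with s ⪯ z, let e, o ∈ V with z(e) = 0 and z(o) = 0, and let i, i' ∈ {1,…,k}. If Δ_{e,i} f̂(s) ≥ Δ_{o,i'} f̂(s), then Δ_{o,i'} f(z) − Δ_{e,i} f(z) ≤ Δ_{e,i} f̂(s) + 2ε. -/

import Mathlib

/-! Orthant submodularity moves the gain of `o` from `z` down to `s`, where the approximation
costs `2ε` and the greedy choice bounds it by the gain of `e`; monotonicity makes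
`Δ_{e,i} f(z)` nonnegative. -/

namespace Stmt15

variable {V : Type*}

/-- Marginal gain `Δ_{e,i} f(x) = f(x[e↦i]) − f(x)`. -/
def marg {k : ℕ} [DecidableEq V] (f : (V → Fin (k+1)) → ℝ)
    (x : V → Fin (k+1)) (e : V) (i : Fin (k+1)) : ℝ :=
  f (Function.update x e i) - f x

/-- `x ⪯ y` : `y` agrees with `x` on the support of `x`. -/
def preceq {k : ℕ} (x y : V → Fin (k+1)) : Prop :=
  ∀ e, x e ≠ 0 → y e = x e

def MonotoneK {k : ℕ} [DecidableEq V] (f : (V → Fin (k+1)) → ℝ) : Prop :=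
  ∀ x : V → Fin (k+1), ∀ e, x e = 0 → ∀ i : Fin (k+1), i ≠ 0 →
    0 ≤ marg f x e i

def OrthantSubmodular {k : ℕ} [DecidableEq V] (f : (V → Fin (k+1)) → ℝ) : Prop :=
  ∀ x y : V → Fin (k+1), preceq x y → ∀ e, y e = 0 → ∀ i : Fin (k+1), i ≠ 0 →
    marg f x e i ≥ marg f y e i

theorem marg_le_marg_add_of_abs_sub_le {k : ℕ} [DecidableEq V] {f g : (V → Fin (k+1)) → ℝ}
    {ε : ℝ} (hclose : ∀ x, |f x - g x| ≤ ε) (x : V → Fin (k+1)) (e : V) (i : Fin (k+1)) :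
    marg f x e i ≤ marg g x e i + 2 * ε := by
  have hupd := abs_le.mp (hclose (Function.update x e i))
  have hx := abs_le.mp (hclose x)
  unfold marg
  linarith [hupd.1, hx.2]

theorem stmt15_general {k : ℕ} [DecidableEq V]
    (f fh : (V → Fin (k+1)) → ℝ)
    (hmono : MonotoneK f) (hos : OrthantSubmodular f)
    (ε : ℝ)
    (hclose : ∀ x, |f x - fh x| ≤ ε)
    (s z : V → Fin (k+1)) (hsz : preceq s z)
    (e o : V) (hze : z e = 0) (hzo : z o = 0)
    (i i' : Fin (k+1)) (hi : i ≠ 0) (hi' : i' ≠ 0)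
    (hgr : marg fh s e i ≥ marg fh s o i') :
    marg f z o i' - marg f z e i ≤ marg fh s e i + 2 * ε := by
  have hsub : marg f z o i' ≤ marg f s o i' := hos s z hsz o hzo i' hi'
  have happrox : marg f s o i' ≤ marg fh s o i' + 2 * ε :=
    marg_le_marg_add_of_abs_sub_le hclose s o i'
  have hnonneg : 0 ≤ marg f z e i := hmono z e hze i hi
  linarith

/-- Per-iteration inequality in the robustness analysis of the greedy algorithm
for monotone `k`-submodular maximization under a matroid constraint:
if `Δ_{e,i} f̂(s) ≥ Δ_{o,i'} f̂(s)` then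
`Δ_{o,i'} f(z) − Δ_{e,i} f(z) ≤ Δ_{e,i} f̂(s) + 2ε`. -/
theorem stmt15 {k : ℕ} [Fintype V] [DecidableEq V]
    (f fh : (V → Fin (k+1)) → ℝ)
    (hmono : MonotoneK f) (hos : OrthantSubmodular f)
    (ε : ℝ) (hε : 0 ≤ ε)
    (hclose : ∀ x, |f x - fh x| ≤ ε)
    (s z : V → Fin (k+1)) (hsz : preceq s z)
    (e o : V) (hze : z e = 0) (hzo : z o = 0)
    (i i' : Fin (k+1)) (hi : i ≠ 0) (hi' : i' ≠ 0)
    (hgr : marg fh s e i ≥ marg fh s o i') :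
    marg f z o i' - marg f z e i ≤ marg fh s e i + 2 * ε :=
  stmt15_general f fh hmono hos ε hclose s z hsz e o hze hzo i i' hi hi' hgr

end Stmt15
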